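/- Let h be a Leibniz algebra. The subspace Ξ(h) = {(D^L,D^R) ∈ Der^L(h)⊕Der^R(h) | D^Lα + D^Rα ∈ Z(h) for all α, and D^R vanishes on Z(h)} is a sub-Leibniz algebra of the semidirect product (Der^L(h)⊕Der^R(h), [·,·]_s), and moreover it is a right ideal. -/

import Mathlib

variable {K : Type*} [Field K] {h : Type*} [AddCommGroup h] [Module K h]

/-- Left derivation. -/
def IsLeftDer (B : h →ₗ[K] h →ₗ[K] h) (D : Module.End K h) : Prop :=
  ∀ a b : h, D (B a b) = B (D a) b + B a (D b)

/-- Right derivation. -/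
def IsRightDer (B : h →ₗ[K] h →ₗ[K] h) (D : Module.End K h) : Prop :=
  ∀ a b : h, D (B a b) = B a (D b) - B b (D a)

/-- Membership in `Ξ(h)`: `(D^L, D^R)` with `D^L` a left derivation, `D^R` a
right derivation, `D^L α + D^R α ∈ Z(h)` for all `α`, and `D^R Z(h) = 0`,
where `Z(h)` is the left center. -/
def InXi (B : h →ₗ[K] h →ₗ[K] h) (D : Module.End K h × Module.End K h) : Prop :=
  IsLeftDer B D.1 ∧ IsRightDer B D.2 ∧
  (∀ α β : h, B (D.1 α + D.2 α) β = 0) ∧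
  (∀ α : h, (∀ β : h, B α β = 0) → D.2 α = 0)

theorem Module.End.lie_apply_eq_sub (f g : Module.End K h) (a : h) :
    ⁅f, g⁆ a = f (g a) - g (f a) := by
  rw [Ring.lie_def, LinearMap.sub_apply, Module.End.mul_apply, Module.End.mul_apply]

section Derivations

variable {B : h →ₗ[K] h →ₗ[K] h} {D E : Module.End K h}

theorem IsLeftDer.lie (hD : IsLeftDer B D) (hE : IsLeftDer B E) : IsLeftDer B ⁅D, E⁆ := by
  intro a b
  simp only [Module.End.lie_apply_eq_sub, map_sub, hD _, hE _, map_add, LinearMap.sub_apply]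
  abel

theorem IsRightDer.lie_of_isLeftDer (hD : IsLeftDer B D) (hE : IsRightDer B E) :
    IsRightDer B ⁅D, E⁆ := by
  intro a b
  simp only [Module.End.lie_apply_eq_sub, map_sub, hD _, hE _, map_add]
  abel

theorem IsLeftDer.apply_mem_leftCenter (hD : IsLeftDer B D) {α : h} (hα : ∀ β, B α β = 0)
    (β : h) : B (D α) β = 0 := by
  simpa [hα] using (hD α β).symm

/-- The semidirect bracket `[(D^L, D^R), E]_s` involves only `D^L`, so both claims of the
theorem reduce to this one. -/
theorem InXi.lie_of_isLeftDer {E : Module.End K h × Module.End K h} (hD : IsLeftDer B D)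
    (hE : InXi B E) : InXi B (⁅D, E.1⁆, ⁅D, E.2⁆) := by
  obtain ⟨hE₁, hE₂, hE_center, hE₂_center⟩ := hE
  refine ⟨hD.lie hE₁, hE₂.lie_of_isLeftDer hD, fun α β => ?_, fun α hα => ?_⟩
  · have hsum : ⁅D, E.1⁆ α + ⁅D, E.2⁆ α = D (E.1 α + E.2 α) - (E.1 (D α) + E.2 (D α)) := by
      simp only [Module.End.lie_apply_eq_sub, map_add]
      abel
    rw [hsum, map_sub, LinearMap.sub_apply, hD.apply_mem_leftCenter (hE_center α),
      hE_center (D α), sub_zero]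
  · rw [Module.End.lie_apply_eq_sub, hE₂_center α hα, map_zero,
      hE₂_center (D α) (hD.apply_mem_leftCenter hα), sub_zero]

end Derivations

theorem Xi_subalgebra_and_right_ideal_general
    (B : h →ₗ[K] h →ₗ[K] h) :
    -- sub-Leibniz algebra
    (∀ D E : Module.End K h × Module.End K h, InXi B D → InXi B E →
      InXi B (⁅D.1, E.1⁆, ⁅D.1, E.2⁆)) ∧
    -- right ideal in Der^L(h) ⊕ Der^R(h)
    (∀ D E : Module.End K h × Module.End K h,
      IsLeftDer B D.1 → IsRightDer B D.2 → InXi B E →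
      InXi B (⁅D.1, E.1⁆, ⁅D.1, E.2⁆)) :=
  ⟨fun _ _ hD hE => hE.lie_of_isLeftDer hD.1, fun _ _ hD _ hE => hE.lie_of_isLeftDer hD⟩

/-- Proposition 3.11 and Corollary 3.12: `Ξ(h)` is a sub-Leibniz algebra of
`(Der^L(h) ⊕ Der^R(h), [·,·]_s)`, and moreover a right ideal: bracketing any
pair of (left, right) derivations with an element of `Ξ(h)` on the right
stays in `Ξ(h)`. -/
theorem Xi_subalgebra_and_right_ideal
    (B : h →ₗ[K] h →ₗ[K] h)
    (hleib : ∀ a b c : h, B a (B b c) = B (B a b) c + B b (B a c)) :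
    -- sub-Leibniz algebra
    (∀ D E : Module.End K h × Module.End K h, InXi B D → InXi B E →
      InXi B (⁅D.1, E.1⁆, ⁅D.1, E.2⁆)) ∧
    -- right ideal in Der^L(h) ⊕ Der^R(h)
    (∀ D E : Module.End K h × Module.End K h,
      IsLeftDer B D.1 → IsRightDer B D.2 → InXi B E →
      InXi B (⁅D.1, E.1⁆, ⁅D.1, E.2⁆)) :=
  Xi_subalgebra_and_right_ideal_general B
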